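/- Algebraic Filtration Theorem: Let A be an N-algebra, μ a valuation on A, and Σ a finite set of L-formulas closed under subformulas. Let L ⊆ A be the universe of a finite sublattice of A containing the top element 1 and containing μ(φ) for every φ ∈ Σ. Define, for a, b ∈ L, a →_L b = ⋁{s ∈ L : a ∧ s ≤ b} and ¬_L a = ⋁{s ∈ L : s ≤ ¬a} (joins taken in A; they belong to L since L is a finite sublattice). Let μ_L be the valuation into the algebra (L, ∧, ∨, →_L, ¬_L, 1) determined by μ_L(p) = μ(p) for every propositional variable p ∈ Σ (and arbitrary on other variables). Then μ_L(φ) = μ(φ) for every φ ∈ Σ. -/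

import Mathlib

inductive Form : Type
  | var : ℕ → Form
  | top : Form
  | and : Form → Form → Form
  | or : Form → Form → Form
  | imp : Form → Form → Form
  | neg : Form → Form

def SubClosed (S : Set Form) : Prop :=
  (∀ φ ψ : Form, φ.and ψ ∈ S → φ ∈ S ∧ ψ ∈ S) ∧
  (∀ φ ψ : Form, φ.or ψ ∈ S → φ ∈ S ∧ ψ ∈ S) ∧
  (∀ φ ψ : Form, φ.imp ψ ∈ S → φ ∈ S ∧ ψ ∈ S) ∧
  (∀ φ : Form, φ.neg ∈ S → φ ∈ S)

/-- Evaluation of a formula in an N-algebra (a generalized Heyting algebra equipped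
with a compatible negation operator `neg`). -/
def evalA {A : Type*} [GeneralizedHeytingAlgebra A] (neg : A → A) (μ : ℕ → A) : Form → A
  | .var p => μ p
  | .top => ⊤
  | .and φ ψ => evalA neg μ φ ⊓ evalA neg μ ψ
  | .or φ ψ => evalA neg μ φ ⊔ evalA neg μ ψ
  | .imp φ ψ => evalA neg μ φ ⇨ evalA neg μ ψ
  | .neg φ => neg (evalA neg μ φ)

/-- Evaluation in the filtrated algebra `(L, ⊓, ⊔, →_L, ¬_L, 1)`. -/
def evalL {A : Type*} [GeneralizedHeytingAlgebra A]
    (impL : A → A → A) (negL : A → A) (ν : ℕ → A) : Form → A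
  | .var p => ν p
  | .top => ⊤
  | .and φ ψ => evalL impL negL ν φ ⊓ evalL impL negL ν ψ
  | .or φ ψ => evalL impL negL ν φ ⊔ evalL impL negL ν ψ
  | .imp φ ψ => impL (evalL impL negL ν φ) (evalL impL negL ν ψ)
  | .neg φ => negL (evalL impL negL ν φ)

/-!
The filtrated operations are joins computed inside `L`. Whenever the true value `a ⇨ b`
(resp. `¬a`) already lies in `L`, it is the greatest element of the set being joined, so the
join inside `L` returns exactly that value. Since `Σ` is closed under subformulas and `L`
contains `μ(φ)` for every `φ ∈ Σ`, this applies at every step of an induction on formulas.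
-/

theorem eq_of_isGreatest_of_joinWithin {α : Type*} [PartialOrder α] {L : Set α}
    {P : α → Prop} {j m : α} (hmax : IsGreatest {s | P s} m) (hm : m ∈ L)
    (hub : ∀ s ∈ L, P s → s ≤ j) (hlub : ∀ u ∈ L, (∀ s ∈ L, P s → s ≤ u) → j ≤ u) :
    j = m :=
  le_antisymm (hlub m hm fun _ _ hs => hmax.2 hs) (hub m hm hmax.1)

theorem isGreatest_inf_le_himp {A : Type*} [GeneralizedHeytingAlgebra A] (a b : A) :
    IsGreatest {s | a ⊓ s ≤ b} (a ⇨ b) :=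
  ⟨inf_himp_le, fun _ hs => le_himp_iff'.2 hs⟩

theorem stmt10_general {A : Type*} [GeneralizedHeytingAlgebra A]
    (neg : A → A)
    (μ : ℕ → A) (S : Set Form) (hSsub : SubClosed S)
    (L : Set A)
    (hLμ : ∀ φ ∈ S, evalA neg μ φ ∈ L)
    (impL : A → A → A) (negL : A → A)
    (himpUb : ∀ a ∈ L, ∀ b ∈ L, ∀ s ∈ L, a ⊓ s ≤ b → s ≤ impL a b)
    (himpLub : ∀ a ∈ L, ∀ b ∈ L, ∀ u ∈ L, (∀ s ∈ L, a ⊓ s ≤ b → s ≤ u) → impL a b ≤ u)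
    (hnegUb : ∀ a ∈ L, ∀ s ∈ L, s ≤ neg a → s ≤ negL a)
    (hnegLub : ∀ a ∈ L, ∀ u ∈ L, (∀ s ∈ L, s ≤ neg a → s ≤ u) → negL a ≤ u)
    (ν : ℕ → A) (hν₂ : ∀ p : ℕ, Form.var p ∈ S → ν p = μ p) :
    ∀ φ ∈ S, evalL impL negL ν φ = evalA neg μ φ := by
  intro φ hφ
  induction φ with
  | var p => exact hν₂ p hφ
  | top => rfl
  | and φ ψ ihφ ihψ =>
    obtain ⟨hφS, hψS⟩ := hSsub.1 φ ψ hφ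
    simp only [evalL, evalA, ihφ hφS, ihψ hψS]
  | or φ ψ ihφ ihψ =>
    obtain ⟨hφS, hψS⟩ := hSsub.2.1 φ ψ hφ
    simp only [evalL, evalA, ihφ hφS, ihψ hψS]
  | imp φ ψ ihφ ihψ =>
    obtain ⟨hφS, hψS⟩ := hSsub.2.2.1 φ ψ hφ
    have ha := hLμ φ hφS
    have hb := hLμ ψ hψS
    simp only [evalL, evalA, ihφ hφS, ihψ hψS]
    exact eq_of_isGreatest_of_joinWithin (isGreatest_inf_le_himp _ _) (hLμ _ hφ)
      (himpUb _ ha _ hb) (himpLub _ ha _ hb)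
  | neg φ ihφ =>
    have hφS := hSsub.2.2.2 φ hφ
    have ha := hLμ φ hφS
    simp only [evalL, evalA, ihφ hφS]
    exact eq_of_isGreatest_of_joinWithin isGreatest_Iic (hLμ _ hφ) (hnegUb _ ha) (hnegLub _ ha)

/-- Algebraic Filtration Theorem: if `L` is a finite sublattice of the N-algebra `A`
containing `⊤` and all values `μ(φ)` for `φ ∈ Σ`, and `→_L`, `¬_L` are the joins
`⋁{s ∈ L : a ⊓ s ≤ b}` resp. `⋁{s ∈ L : s ≤ ¬a}` (computed in the finite lattice `L`),
then the `L`-evaluation agrees with `μ` on all of `Σ`. -/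
theorem stmt10 {A : Type*} [GeneralizedHeytingAlgebra A]
    (neg : A → A) (hneg : ∀ x y : A, x ⊓ neg y = x ⊓ neg (x ⊓ y))
    (μ : ℕ → A) (S : Set Form) (hSfin : S.Finite) (hSsub : SubClosed S)
    (L : Set A) (hLfin : L.Finite) (hLtop : ⊤ ∈ L)
    (hLinf : ∀ a ∈ L, ∀ b ∈ L, a ⊓ b ∈ L) (hLsup : ∀ a ∈ L, ∀ b ∈ L, a ⊔ b ∈ L)
    (hLμ : ∀ φ ∈ S, evalA neg μ φ ∈ L)
    (impL : A → A → A) (negL : A → A)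
    (himpMem : ∀ a ∈ L, ∀ b ∈ L, impL a b ∈ L)
    (himpUb : ∀ a ∈ L, ∀ b ∈ L, ∀ s ∈ L, a ⊓ s ≤ b → s ≤ impL a b)
    (himpLub : ∀ a ∈ L, ∀ b ∈ L, ∀ u ∈ L, (∀ s ∈ L, a ⊓ s ≤ b → s ≤ u) → impL a b ≤ u)
    (hnegMem : ∀ a ∈ L, negL a ∈ L)
    (hnegUb : ∀ a ∈ L, ∀ s ∈ L, s ≤ neg a → s ≤ negL a)
    (hnegLub : ∀ a ∈ L, ∀ u ∈ L, (∀ s ∈ L, s ≤ neg a → s ≤ u) → negL a ≤ u)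
    (ν : ℕ → A) (hν₁ : ∀ p : ℕ, ν p ∈ L) (hν₂ : ∀ p : ℕ, Form.var p ∈ S → ν p = μ p) :
    ∀ φ ∈ S, evalL impL negL ν φ = evalA neg μ φ :=
  stmt10_general neg μ S hSsub L hLμ impL negL himpUb himpLub hnegUb hnegLub ν hν₂
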